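/- The presented group ⟨m₁, m₂, b ∣ [m₂, m₁] = 1, b⁻¹m₁b = m₂, [m₂m₁, b] = 1⟩ is isomorphic to the presented group ⟨m₁, b ∣ [m₁, b²] = 1, [m₁, b m₁ b] = 1⟩, and both are isomorphic to the presented group ⟨m, b ∣ [m, b²] = 1, [m², b] = 1⟩ (an isomorphism to the last group being induced by m ↦ m₁b, b ↦ b). -/

import Mathlib

open scoped commutatorElement

/-- The relators of `⟨m₁, m₂, b ∣ [m₂, m₁] = 1, b⁻¹m₁b = m₂, [m₂m₁, b] = 1⟩`,
with generators `m₁ = 0`, `m₂ = 1`, `b = 2`. -/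
def relsA : Set (FreeGroup (Fin 3)) :=
  let m₁ : FreeGroup (Fin 3) := FreeGroup.of 0
  let m₂ : FreeGroup (Fin 3) := FreeGroup.of 1
  let b : FreeGroup (Fin 3) := FreeGroup.of 2
  { ⁅m₂, m₁⁆, b⁻¹ * m₁ * b * m₂⁻¹, ⁅m₂ * m₁, b⁆ }

/-- The relators of `⟨m₁, b ∣ [m₁, b²] = 1, [m₁, b m₁ b] = 1⟩`, with generators
`m₁ = 0`, `b = 1`. -/
def relsB : Set (FreeGroup (Fin 2)) :=
  let m₁ : FreeGroup (Fin 2) := FreeGroup.of 0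
  let b : FreeGroup (Fin 2) := FreeGroup.of 1
  { ⁅m₁, b ^ 2⁆, ⁅m₁, b * m₁ * b⁆ }

/-- The relators of `K₂ = ⟨m, b ∣ [m, b²] = 1, [m², b] = 1⟩`, with generators
`m = 0`, `b = 1`. -/
def relsK2 : Set (FreeGroup (Fin 2)) :=
  let m : FreeGroup (Fin 2) := FreeGroup.of 0
  let b : FreeGroup (Fin 2) := FreeGroup.of 1
  { ⁅m, b ^ 2⁆, ⁅m ^ 2, b⁆ }

/-!
Eliminating `m₂ = b⁻¹m₁b` turns the first presentation into
`⟨m₁, b ∣ [b⁻¹m₁b, m₁], [b⁻¹m₁bm₁, b]⟩`. The second relator is `m₁bm₁b = bm₁bm₁`, i.e.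
`[m₁, bm₁b] = 1`; granted this, `b⁻¹m₁b = b⁻²(bm₁b)` commutes with `m₁` iff `b²` does.
Substituting `m = m₁b` in `K₂` works the same way: `m₁b` commutes with `b²` iff `m₁` does,
and `(m₁b)²b = b(m₁b)²` is again `m₁bm₁b = bm₁bm₁`.
-/

section Commute

variable {G : Type*} [Group G]

theorem commute_mul_left_iff_of_commute_left {a b c : G} (ha : Commute a c) :
    Commute (a * b) c ↔ Commute b c :=
  ⟨fun hab => by simpa using ha.inv_left.mul_left hab, ha.mul_left⟩

theorem commute_mul_left_iff_of_commute_right {a b c : G} (hb : Commute b c) :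
    Commute (a * b) c ↔ Commute a c :=
  ⟨fun hab => by simpa using hab.mul_left hb.inv_left, fun ha => ha.mul_left hb⟩

theorem commute_mul_mul_iff (x b : G) : Commute (x * b * x) b ↔ Commute x (b * x * b) := by
  simp only [commute_iff_eq, mul_assoc]

theorem commute_conj_and_commute_conj_mul_iff (x b : G) :
    Commute (b⁻¹ * x * b) x ∧ Commute (b⁻¹ * x * b * x) b ↔
      Commute x (b ^ 2) ∧ Commute x (b * x * b) := by
  have hconj : b⁻¹ * x * b = (b ^ 2)⁻¹ * (b * x * b) := by group
  have hconj_mul : b⁻¹ * x * b * x = b⁻¹ * (x * b * x) := by group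
  rw [hconj_mul, commute_mul_left_iff_of_commute_left (Commute.refl b).inv_left,
    commute_mul_mul_iff, and_congr_left_iff]
  intro hx
  rw [hconj, commute_mul_left_iff_of_commute_right hx.symm, Commute.inv_left_iff,
    Commute.symm_iff]

theorem commute_mul_sq_and_commute_sq_iff (x b : G) :
    Commute (x * b) (b ^ 2) ∧ Commute ((x * b) ^ 2) b ↔
      Commute x (b ^ 2) ∧ Commute x (b * x * b) := by
  have hsq : (x * b) ^ 2 = x * b * x * b := by rw [sq, ← mul_assoc]
  rw [commute_mul_left_iff_of_commute_right (Commute.self_pow b 2), hsq,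
    commute_mul_left_iff_of_commute_right (Commute.refl b), commute_mul_mul_iff]

end Commute

namespace PresentedGroup

variable {α β : Type*}

theorem lift_of_eq_one {rels : Set (FreeGroup α)} :
    ∀ r ∈ rels, FreeGroup.lift (of : α → PresentedGroup rels) r = 1 := by
  rw [show FreeGroup.lift of = mk rels from FreeGroup.ext_hom _ _ fun _ => FreeGroup.lift_apply_of]
  exact fun _ => one_of_mem

def mulEquivOfLift {R : Set (FreeGroup α)} {S : Set (FreeGroup β)}
    {f : α → PresentedGroup S} {g : β → PresentedGroup R}
    (hf : ∀ r ∈ R, FreeGroup.lift f r = 1) (hg : ∀ r ∈ S, FreeGroup.lift g r = 1)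
    (hgf : ∀ a, toGroup hg (f a) = of a) (hfg : ∀ b, toGroup hf (g b) = of b) :
    PresentedGroup R ≃* PresentedGroup S :=
  MonoidHom.toMulEquiv (toGroup hf) (toGroup hg)
    (ext fun a => by simpa [toGroup.of] using hgf a)
    (ext fun b => by simpa [toGroup.of] using hfg b)

@[simp]
theorem mulEquivOfLift_of {R : Set (FreeGroup α)} {S : Set (FreeGroup β)}
    {f : α → PresentedGroup S} {g : β → PresentedGroup R}
    (hf : ∀ r ∈ R, FreeGroup.lift f r = 1) (hg : ∀ r ∈ S, FreeGroup.lift g r = 1)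
    (hgf : ∀ a, toGroup hg (f a) = of a) (hfg : ∀ b, toGroup hf (g b) = of b) (a : α) :
    mulEquivOfLift hf hg hgf hfg (of a) = f a :=
  toGroup.of hf

end PresentedGroup

open PresentedGroup

section Relators

variable {G : Type*} [Group G]

theorem lift_relsA_eq_one_iff (f : Fin 3 → G) :
    (∀ r ∈ relsA, FreeGroup.lift f r = 1) ↔
      Commute (f 1) (f 0) ∧ (f 2)⁻¹ * f 0 * f 2 = f 1 ∧ Commute (f 1 * f 0) (f 2) := by
  simp [relsA, map_commutatorElement, commutatorElement_eq_one_iff_commute, mul_inv_eq_one]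

theorem lift_relsB_eq_one_iff (f : Fin 2 → G) :
    (∀ r ∈ relsB, FreeGroup.lift f r = 1) ↔
      Commute (f 0) (f 1 ^ 2) ∧ Commute (f 0) (f 1 * f 0 * f 1) := by
  simp [relsB, map_commutatorElement, commutatorElement_eq_one_iff_commute]

theorem lift_relsK2_eq_one_iff (f : Fin 2 → G) :
    (∀ r ∈ relsK2, FreeGroup.lift f r = 1) ↔
      Commute (f 0) (f 1 ^ 2) ∧ Commute (f 0 ^ 2) (f 1) := by
  simp [relsK2, map_commutatorElement, commutatorElement_eq_one_iff_commute]

end Relators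

def relsAMulEquivRelsB : PresentedGroup relsA ≃* PresentedGroup relsB :=
  mulEquivOfLift (f := ![of 0, (of 1)⁻¹ * of 0 * of 1, of 1]) (g := ![of 0, of 2])
    (by
      rw [lift_relsA_eq_one_iff]
      have h := (commute_conj_and_commute_conj_mul_iff _ _).2
        ((lift_relsB_eq_one_iff of).1 lift_of_eq_one)
      exact ⟨h.1, rfl, h.2⟩)
    (by
      rw [lift_relsB_eq_one_iff]
      obtain ⟨h₁, h₂, h₃⟩ := (lift_relsA_eq_one_iff of).1 lift_of_eq_one
      rw [← h₂] at h₁ h₃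
      exact (commute_conj_and_commute_conj_mul_iff _ _).1 ⟨h₁, h₃⟩)
    (fun a => by
      fin_cases a <;> simp [toGroup.of, ((lift_relsA_eq_one_iff of).1 lift_of_eq_one).2.1])
    (fun b => by fin_cases b <;> simp [toGroup.of])

def relsK2MulEquivRelsB : PresentedGroup relsK2 ≃* PresentedGroup relsB :=
  mulEquivOfLift (f := ![of 0 * of 1, of 1]) (g := ![of 0 * (of 1)⁻¹, of 1])
    (by
      rw [lift_relsK2_eq_one_iff]
      exact (commute_mul_sq_and_commute_sq_iff _ _).2
        ((lift_relsB_eq_one_iff of).1 lift_of_eq_one))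
    (by
      rw [lift_relsB_eq_one_iff]
      have h := commute_mul_sq_and_commute_sq_iff (of 0 * (of 1)⁻¹ : PresentedGroup relsK2) (of 1)
      rw [inv_mul_cancel_right] at h
      exact h.1 ((lift_relsK2_eq_one_iff of).1 lift_of_eq_one))
    (fun a => by fin_cases a <;> simp [toGroup.of])
    (fun b => by fin_cases b <;> simp [toGroup.of])

/-- `⟨m₁, m₂, b ∣ [m₂, m₁] = 1, b⁻¹m₁b = m₂, [m₂m₁, b] = 1⟩` is
isomorphic to `⟨m₁, b ∣ [m₁, b²] = 1, [m₁, b m₁ b] = 1⟩`, and both are isomorphic to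
`⟨m, b ∣ [m, b²] = 1, [m², b] = 1⟩`, an isomorphism to the last group being induced by
`m ↦ m₁b`, `b ↦ b`. -/
theorem presentations_isomorphic :
    Nonempty (PresentedGroup relsA ≃* PresentedGroup relsB) ∧
    Nonempty (PresentedGroup relsA ≃* PresentedGroup relsK2) ∧
    ∃ e : PresentedGroup relsK2 ≃* PresentedGroup relsB,
      e (PresentedGroup.of 0) = PresentedGroup.of 0 * PresentedGroup.of 1 ∧
      e (PresentedGroup.of 1) = PresentedGroup.of 1 :=
  ⟨⟨relsAMulEquivRelsB⟩, ⟨relsAMulEquivRelsB.trans relsK2MulEquivRelsB.symm⟩,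
    relsK2MulEquivRelsB, mulEquivOfLift_of .., mulEquivOfLift_of ..⟩
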